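/- Let Γ = ⟨a, t, w ∣ a² = (at)³ = (w⁻¹awa)³ = 1, tw = wt⟩ and K = ⟨a, t, v ∣ a² = (at)³ = (av)³ = v² = (tv)³ = 1⟩. Let A be the subgroup of K generated by a and t, and B the subgroup of K generated by v and t. Then there exists an isomorphism φ : A → B with φ(a) = v and φ(t) = t, and Γ is isomorphic to the HNN extension of K with associated subgroups A and B and associating isomorphism φ, via an isomorphism sending a ↦ a, t ↦ t, and w to the stable letter. -/

import Mathlib

/-- `Γ = ⟨a, t, w ∣ a² = (at)³ = (w⁻¹awa)³ = 1, tw = wt⟩`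
(generators: `0 ↦ a`, `1 ↦ t`, `2 ↦ w`). -/
abbrev GammaGrp : Type :=
  PresentedGroup
    ({FreeGroup.of (0 : Fin 3) ^ 2,
      (FreeGroup.of (0 : Fin 3) * FreeGroup.of (1 : Fin 3)) ^ 3,
      ((FreeGroup.of (2 : Fin 3))⁻¹ * FreeGroup.of (0 : Fin 3) *
        FreeGroup.of (2 : Fin 3) * FreeGroup.of (0 : Fin 3)) ^ 3,
      FreeGroup.of (1 : Fin 3) * FreeGroup.of (2 : Fin 3) *
        (FreeGroup.of (1 : Fin 3))⁻¹ * (FreeGroup.of (2 : Fin 3))⁻¹} :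
        Set (FreeGroup (Fin 3)))

/-- `K = ⟨a, t, v ∣ a² = (at)³ = (av)³ = v² = (tv)³ = 1⟩`
(generators: `0 ↦ a`, `1 ↦ t`, `2 ↦ v`). -/
abbrev KGrp : Type :=
  PresentedGroup
    ({FreeGroup.of (0 : Fin 3) ^ 2,
      (FreeGroup.of (0 : Fin 3) * FreeGroup.of (1 : Fin 3)) ^ 3,
      (FreeGroup.of (0 : Fin 3) * FreeGroup.of (2 : Fin 3)) ^ 3,
      FreeGroup.of (2 : Fin 3) ^ 2,
      (FreeGroup.of (1 : Fin 3) * FreeGroup.of (2 : Fin 3)) ^ 3} :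
        Set (FreeGroup (Fin 3)))

def aK : KGrp := PresentedGroup.of 0
def tK : KGrp := PresentedGroup.of 1
def vK : KGrp := PresentedGroup.of 2

/-- `A = ⟨a, t⟩ ≤ K`. -/
def Asub : Subgroup KGrp := Subgroup.closure {aK, tK}

/-- `B = ⟨v, t⟩ ≤ K`. -/
def Bsub : Subgroup KGrp := Subgroup.closure {vK, tK}

/-!
The substitution `a ↔ v`, `t ↦ t` preserves the relations of `K`, so it is an involutive
automorphism of `K` carrying `A` onto `B`; its restriction is `φ`.
In `Γ` put `v := w a w⁻¹`. Conjugating by `w` turns `(w⁻¹ a w a)³ = 1` into `(a v)³ = 1`, and,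
since `t` and `w` commute, `a² = (at)³ = 1` into `v² = (tv)³ = 1`; so `K` maps to `Γ`, and
conjugation by `w` realises `φ` on `A`, so the map extends to the HNN extension with `τ ↦ w`.
Conversely `a, t, τ` satisfy the relations of `Γ`, and the two maps are inverse on generators.
-/

theorem mul_pow_eq_one_swap {G : Type*} [Group G] {x y : G} {n : ℕ} (h : (x * y) ^ n = 1) :
    (y * x) ^ n = 1 :=
  mul_left_cancel (a := x) (by rw [← mul_pow_mul, h, one_mul, mul_one])

theorem conj_pow_eq_one {G : Type*} [Group G] (c : G) {x : G} {n : ℕ} (h : x ^ n = 1) :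
    (c * x * c⁻¹) ^ n = 1 := by
  rw [conj_pow, h, mul_one, mul_inv_cancel]

theorem semiconjBy_of_mem_closure {G H : Type*} [Group G] [Group H] {f g : G →* H} {c : H}
    {s : Set G} (h : ∀ x ∈ s, SemiconjBy c (f x) (g x)) {x : G} (hx : x ∈ Subgroup.closure s) :
    SemiconjBy c (f x) (g x) := by
  induction hx using Subgroup.closure_induction with
  | mem x hx => exact h x hx
  | one => rw [map_one, map_one]; exact SemiconjBy.one_right c
  | mul x y _ _ hx hy => rw [map_mul, map_mul]; exact hx.mul_right hy
  | inv x _ hx => rw [map_inv, map_inv]; exact hx.inv_right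

namespace KGrp

theorem aK_sq : aK ^ 2 = 1 :=
  PresentedGroup.one_of_mem (x := FreeGroup.of (0 : Fin 3) ^ 2) (by simp)

theorem aK_mul_tK_pow_three : (aK * tK) ^ 3 = 1 :=
  PresentedGroup.one_of_mem (x := (FreeGroup.of (0 : Fin 3) * FreeGroup.of 1) ^ 3) (by simp)

theorem aK_mul_vK_pow_three : (aK * vK) ^ 3 = 1 :=
  PresentedGroup.one_of_mem (x := (FreeGroup.of (0 : Fin 3) * FreeGroup.of 2) ^ 3) (by simp)

theorem vK_sq : vK ^ 2 = 1 :=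
  PresentedGroup.one_of_mem (x := FreeGroup.of (2 : Fin 3) ^ 2) (by simp)

theorem tK_mul_vK_pow_three : (tK * vK) ^ 3 = 1 :=
  PresentedGroup.one_of_mem (x := (FreeGroup.of (1 : Fin 3) * FreeGroup.of 2) ^ 3) (by simp)

variable {G : Type*} [Group G]

def lift (a t v : G) (ha : a ^ 2 = 1) (hat : (a * t) ^ 3 = 1) (hav : (a * v) ^ 3 = 1)
    (hv : v ^ 2 = 1) (htv : (t * v) ^ 3 = 1) : KGrp →* G :=
  PresentedGroup.toGroup (f := ![a, t, v]) (by rintro r (rfl | rfl | rfl | rfl | rfl) <;> simpa)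

section lift

variable (a t v : G) (ha : a ^ 2 = 1) (hat : (a * t) ^ 3 = 1) (hav : (a * v) ^ 3 = 1)
    (hv : v ^ 2 = 1) (htv : (t * v) ^ 3 = 1)

@[simp]
theorem lift_aK : lift a t v ha hat hav hv htv aK = a := PresentedGroup.toGroup.of _

@[simp]
theorem lift_tK : lift a t v ha hat hav hv htv tK = t := PresentedGroup.toGroup.of _

@[simp]
theorem lift_vK : lift a t v ha hat hav hv htv vK = v := PresentedGroup.toGroup.of _

end lift

theorem hom_ext {f g : KGrp →* G} (ha : f aK = g aK) (ht : f tK = g tK) (hv : f vK = g vK) :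
    f = g :=
  PresentedGroup.ext fun i => by fin_cases i <;> assumption

end KGrp

namespace GammaGrp

def aG : GammaGrp := PresentedGroup.of 0
def tG : GammaGrp := PresentedGroup.of 1
def wG : GammaGrp := PresentedGroup.of 2

theorem aG_sq : aG ^ 2 = 1 :=
  PresentedGroup.one_of_mem (x := FreeGroup.of (0 : Fin 3) ^ 2) (by simp)

theorem aG_mul_tG_pow_three : (aG * tG) ^ 3 = 1 :=
  PresentedGroup.one_of_mem (x := (FreeGroup.of (0 : Fin 3) * FreeGroup.of 1) ^ 3) (by simp)

theorem inv_wG_mul_aG_mul_wG_mul_aG_pow_three : (wG⁻¹ * aG * wG * aG) ^ 3 = 1 :=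
  PresentedGroup.one_of_mem
    (x := ((FreeGroup.of (2 : Fin 3))⁻¹ * FreeGroup.of 0 * FreeGroup.of 2 * FreeGroup.of 0) ^ 3)
    (by simp)

theorem commute_tG_wG : Commute tG wG := by
  have h : tG * wG * tG⁻¹ * wG⁻¹ = 1 :=
    PresentedGroup.one_of_mem (x := FreeGroup.of (1 : Fin 3) * FreeGroup.of 2 *
      (FreeGroup.of 1)⁻¹ * (FreeGroup.of 2)⁻¹) (by simp)
  rwa [mul_assoc, ← mul_inv_rev, mul_inv_eq_one] at h

variable {G : Type*} [Group G]

def lift (a t w : G) (ha : a ^ 2 = 1) (hat : (a * t) ^ 3 = 1)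
    (hw : (w⁻¹ * a * w * a) ^ 3 = 1) (htw : Commute t w) : GammaGrp →* G :=
  PresentedGroup.toGroup (f := ![a, t, w]) (by
    rintro r (rfl | rfl | rfl | rfl) <;> simp [ha, hat, hw, htw.eq])

section lift

variable (a t w : G) (ha : a ^ 2 = 1) (hat : (a * t) ^ 3 = 1)
    (hw : (w⁻¹ * a * w * a) ^ 3 = 1) (htw : Commute t w)

@[simp]
theorem lift_aG : lift a t w ha hat hw htw aG = a := PresentedGroup.toGroup.of _

@[simp]
theorem lift_tG : lift a t w ha hat hw htw tG = t := PresentedGroup.toGroup.of _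

@[simp]
theorem lift_wG : lift a t w ha hat hw htw wG = w := PresentedGroup.toGroup.of _

end lift

theorem hom_ext {f g : GammaGrp →* G} (ha : f aG = g aG) (ht : f tG = g tG) (hw : f wG = g wG) :
    f = g :=
  PresentedGroup.ext fun i => by fin_cases i <;> assumption

def vG : GammaGrp := wG * aG * wG⁻¹

theorem semiconjBy_wG_aG_vG : SemiconjBy wG aG vG := (inv_mul_cancel_right _ _).symm

theorem vG_sq : vG ^ 2 = 1 := conj_pow_eq_one wG aG_sq

theorem aG_mul_vG_pow_three : (aG * vG) ^ 3 = 1 := by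
  have h : aG * vG = wG * (wG⁻¹ * aG * wG * aG) * wG⁻¹ := by rw [vG]; group
  rw [h]
  exact conj_pow_eq_one wG inv_wG_mul_aG_mul_wG_mul_aG_pow_three

theorem tG_mul_vG_pow_three : (tG * vG) ^ 3 = 1 := by
  have h : tG * vG = wG * (tG * aG) * wG⁻¹ := by
    rw [vG, ← mul_assoc, ← mul_assoc, commute_tG_wG.eq]; group
  rw [h]
  exact conj_pow_eq_one wG (mul_pow_eq_one_swap aG_mul_tG_pow_three)

end GammaGrp

open KGrp GammaGrp

def swapAV : KGrp →* KGrp :=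
  KGrp.lift vK tK aK vK_sq (mul_pow_eq_one_swap tK_mul_vK_pow_three)
    (mul_pow_eq_one_swap aK_mul_vK_pow_three) aK_sq (mul_pow_eq_one_swap aK_mul_tK_pow_three)

@[simp] theorem swapAV_aK : swapAV aK = vK := KGrp.lift_aK ..
@[simp] theorem swapAV_tK : swapAV tK = tK := KGrp.lift_tK ..
@[simp] theorem swapAV_vK : swapAV vK = aK := KGrp.lift_vK ..

theorem swapAV_comp_swapAV : swapAV.comp swapAV = MonoidHom.id KGrp :=
  KGrp.hom_ext (by simp) (by simp) (by simp)

def swapAVEquiv : KGrp ≃* KGrp :=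
  swapAV.toMulEquiv swapAV swapAV_comp_swapAV swapAV_comp_swapAV

theorem map_swapAVEquiv_Asub : Asub.map (swapAVEquiv : KGrp →* KGrp) = Bsub := by
  rw [Asub, Bsub, MonoidHom.map_closure, Set.image_pair]
  simp [swapAVEquiv]

def assocEquiv : Asub ≃* Bsub :=
  (swapAVEquiv.subgroupMap Asub).trans (MulEquiv.subgroupCongr map_swapAVEquiv_Asub)

abbrev KHNN : Type := HNNExtension KGrp Asub Bsub assocEquiv

def kToGamma : KGrp →* GammaGrp :=
  KGrp.lift aG tG vG aG_sq aG_mul_tG_pow_three aG_mul_vG_pow_three vG_sq tG_mul_vG_pow_three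

theorem semiconjBy_wG_kToGamma {x : KGrp} (hx : x ∈ Asub) :
    SemiconjBy wG (kToGamma x) (kToGamma (swapAV x)) := by
  refine semiconjBy_of_mem_closure (g := kToGamma.comp swapAV) ?_ hx
  rintro y (rfl | rfl)
  · simp only [kToGamma, MonoidHom.comp_apply, swapAV_aK, KGrp.lift_aK, KGrp.lift_vK]
    exact semiconjBy_wG_aG_vG
  · simp only [kToGamma, MonoidHom.comp_apply, swapAV_tK, KGrp.lift_tK]
    exact commute_tG_wG.symm

def hnnToGamma : KHNN →* GammaGrp :=
  HNNExtension.lift kToGamma wG fun x => semiconjBy_wG_kToGamma x.2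

theorem of_vK_eq_conj : (HNNExtension.of vK : KHNN) =
    HNNExtension.t * HNNExtension.of aK * HNNExtension.t⁻¹ :=
  HNNExtension.equiv_eq_conj (φ := assocEquiv) ⟨aK, Subgroup.subset_closure (by simp)⟩

theorem commute_t_of_tK : Commute (HNNExtension.t : KHNN) (HNNExtension.of tK) :=
  HNNExtension.t_mul_of (φ := assocEquiv) ⟨tK, Subgroup.subset_closure (by simp)⟩

open HNNExtension in
def gammaToHNN : GammaGrp →* KHNN :=
  GammaGrp.lift (of aK) (of tK) t (by rw [← map_pow, aK_sq, map_one])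
    (by rw [← map_mul, ← map_pow, aK_mul_tK_pow_three, map_one])
    (by
      have h : (t⁻¹ * of aK * t * of aK : KHNN) = t⁻¹ * (of aK * of vK) * t⁻¹⁻¹ := by
        rw [of_vK_eq_conj]; group
      rw [h, ← map_mul]
      exact conj_pow_eq_one _ (by rw [← map_pow, aK_mul_vK_pow_three, map_one]))
    commute_t_of_tK.symm

@[simp] theorem gammaToHNN_aG : gammaToHNN aG = HNNExtension.of aK := GammaGrp.lift_aG ..
@[simp] theorem gammaToHNN_tG : gammaToHNN tG = HNNExtension.of tK := GammaGrp.lift_tG ..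
@[simp] theorem gammaToHNN_wG : gammaToHNN wG = HNNExtension.t := GammaGrp.lift_wG ..

@[simp] theorem hnnToGamma_of (x : KGrp) : hnnToGamma (HNNExtension.of x) = kToGamma x :=
  HNNExtension.lift_of ..

@[simp] theorem hnnToGamma_t : hnnToGamma HNNExtension.t = wG := HNNExtension.lift_t ..

theorem hnnToGamma_comp_gammaToHNN : hnnToGamma.comp gammaToHNN = MonoidHom.id GammaGrp :=
  GammaGrp.hom_ext (by simp [kToGamma]) (by simp [kToGamma]) (by simp)

theorem gammaToHNN_comp_hnnToGamma : gammaToHNN.comp hnnToGamma = MonoidHom.id KHNN :=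
  HNNExtension.hom_ext (KGrp.hom_ext (by simp [kToGamma]) (by simp [kToGamma])
    (by simp [kToGamma, vG, of_vK_eq_conj])) (by simp)

/-- there is an isomorphism `φ : A → B` with `φ(a) = v`,
`φ(t) = t`, and `Γ` is isomorphic to the HNN extension of `K` with associated
subgroups `A`, `B` and associating isomorphism `φ`, via an isomorphism sending
`a ↦ a`, `t ↦ t` and `w` to the stable letter. -/
theorem gamma_iso_hnnExtension :
    ∃ φ : Asub ≃* Bsub,
      (φ ⟨aK, Subgroup.subset_closure (Set.mem_insert _ _)⟩ : KGrp) = vK ∧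
      (φ ⟨tK, Subgroup.subset_closure (Set.mem_insert_of_mem _ rfl)⟩ : KGrp) = tK ∧
      ∃ ψ : GammaGrp ≃* HNNExtension KGrp Asub Bsub φ,
        ψ (PresentedGroup.of 0) = HNNExtension.of aK ∧
        ψ (PresentedGroup.of 1) = HNNExtension.of tK ∧
        ψ (PresentedGroup.of 2) = HNNExtension.t :=
  ⟨assocEquiv, swapAV_aK, swapAV_tK,
    gammaToHNN.toMulEquiv hnnToGamma hnnToGamma_comp_gammaToHNN gammaToHNN_comp_hnnToGamma,
    gammaToHNN_aG, gammaToHNN_tG, gammaToHNN_wG⟩
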